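/- Let k2 > k1, let b ≥ 0 satisfy 1 + k1 b² > 0 and 1 + k2 b² > 0, and let φ(s) = ((1+k1 s²)(1+k2 s²))^{1/4} · exp(∫₀^s √(k2−k1)/(2(1+k1 t²)√(1+k2 t²)) dt). Then ∫₀^π φ(b·cos t)^{−2} dt = π / √(1+k1 b²). Consequently, the function f(b) = π / ∫₀^π φ(b cos t)^{−2} dt (the n=2 volume factor) equals √(1+k1 b²). -/

import Mathlib

/-!
With `A = 1 + k1 s²`, `B = 1 + k2 s²` and `c = √(k2 - k1)`, the exponent of `φ` has the
primitive `(log (√B + c s) - log A / 2) / 2`, so `φ(s)² = √B (√B + c s)`. Since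
`(√B + c s)(√B - c s) = B - c² s² = A`, this gives `φ(s)⁻² + φ(-s)⁻² = 2 / A`. The reflection
`t ↦ π - t` exchanges `cos t` and `-cos t`, so the integral of `φ(b cos t)⁻²` over `[0, π]`
equals that of `1 / (1 + k1 b² cos² t)`, which is `π / √(1 + k1 b²)`.
-/

open Real intervalIntegral

/-- The two-dimensional solution `φ` of (1.7). -/
noncomputable def phi (k1 k2 s : ℝ) : ℝ :=
  ((1 + k1 * s ^ 2) * (1 + k2 * s ^ 2)) ^ ((1 : ℝ) / 4) *
    exp (∫ t in (0 : ℝ)..s, √(k2 - k1) / (2 * (1 + k1 * t ^ 2) * √(1 + k2 * t ^ 2)))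

lemma one_add_mul_sq_pos_of_sq_le {k s t : ℝ} (hs : 0 < 1 + k * s ^ 2) (hts : t ^ 2 ≤ s ^ 2) :
    0 < 1 + k * t ^ 2 := by
  rcases le_or_gt 0 k with hk | hk <;> nlinarith [sq_nonneg t]

lemma abs_mul_lt_sqrt {k1 k2 c s : ℝ} (hc : c ^ 2 = k2 - k1) (hs : 0 < 1 + k1 * s ^ 2) :
    |c * s| < √(1 + k2 * s ^ 2) := by
  rw [lt_sqrt (abs_nonneg _), sq_abs]
  nlinarith

lemma sqrt_add_mul_pos {k1 k2 c s : ℝ} (hc : c ^ 2 = k2 - k1) (hs : 0 < 1 + k1 * s ^ 2) :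
    0 < √(1 + k2 * s ^ 2) + c * s := by
  linarith [neg_abs_le (c * s), abs_mul_lt_sqrt hc hs]

lemma hasDerivAt_log_sqrt_add_mul_sub {k1 k2 c t : ℝ} (hc : c ^ 2 = k2 - k1)
    (ht : 0 < 1 + k1 * t ^ 2) :
    HasDerivAt (fun t => (log (√(1 + k2 * t ^ 2) + c * t) - log (1 + k1 * t ^ 2) / 2) / 2)
      (c / (2 * (1 + k1 * t ^ 2) * √(1 + k2 * t ^ 2))) t := by
  have hlt := abs_mul_lt_sqrt hc ht
  have hB : 0 < 1 + k2 * t ^ 2 := by nlinarith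
  have hβ2 : √(1 + k2 * t ^ 2) ^ 2 = 1 + k2 * t ^ 2 := sq_sqrt hB.le
  have hpos := sqrt_add_mul_pos hc ht
  have hsq : ∀ k : ℝ, HasDerivAt (fun t => 1 + k * t ^ 2) (2 * k * t) t := fun k =>
    (((hasDerivAt_pow 2 t).const_mul k).const_add 1).congr_deriv (by push_cast; ring)
  have hnum := (((hsq k2).sqrt hB.ne').add ((hasDerivAt_id t).const_mul c)).log hpos.ne'
  refine ((hnum.sub (((hsq k1).log ht.ne').div_const 2)).div_const 2).congr_deriv ?_
  simp only [Pi.add_apply, id]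
  field_simp
  rw [sub_eq_iff_eq_add, ← add_div, div_eq_div_iff (by rw [mul_comm t]; exact hpos.ne')
    (by rw [mul_comm]; exact ht.ne')]
  linear_combination (-(k1 * t)) * hβ2 - t * hc

lemma integral_phi_integrand {k1 k2 s : ℝ} (hk : k1 ≤ k2) (hs : 0 < 1 + k1 * s ^ 2) :
    ∫ t in (0 : ℝ)..s, √(k2 - k1) / (2 * (1 + k1 * t ^ 2) * √(1 + k2 * t ^ 2)) =
      (log (√(1 + k2 * s ^ 2) + √(k2 - k1) * s) - log (1 + k1 * s ^ 2) / 2) / 2 := by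
  have hc : √(k2 - k1) ^ 2 = k2 - k1 := sq_sqrt (sub_nonneg.mpr hk)
  have hA : ∀ t ∈ Set.uIcc 0 s, 0 < 1 + k1 * t ^ 2 := fun t ht =>
    one_add_mul_sq_pos_of_sq_le hs (sq_le_sq.mpr (by simpa using Set.abs_sub_left_of_mem_uIcc ht))
  rw [integral_eq_sub_of_hasDerivAt (fun t ht => hasDerivAt_log_sqrt_add_mul_sub hc (hA t ht))]
  · simp
  · refine ContinuousOn.intervalIntegrable (continuousOn_const.div (by fun_prop) fun t ht => ?_)
    have := hA t ht
    have := (abs_nonneg _).trans_lt (abs_mul_lt_sqrt hc (hA t ht))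
    positivity

lemma phi_sq {k1 k2 s : ℝ} (hk : k1 ≤ k2) (hs : 0 < 1 + k1 * s ^ 2) :
    phi k1 k2 s ^ 2 = √(1 + k2 * s ^ 2) * (√(1 + k2 * s ^ 2) + √(k2 - k1) * s) := by
  have hc : √(k2 - k1) ^ 2 = k2 - k1 := sq_sqrt (sub_nonneg.mpr hk)
  have hpos := sqrt_add_mul_pos hc hs
  have hB : 0 ≤ 1 + k2 * s ^ 2 := by nlinarith
  have hexp : exp ((log (√(1 + k2 * s ^ 2) + √(k2 - k1) * s) - log (1 + k1 * s ^ 2) / 2) / 2) ^ 2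
      = (√(1 + k2 * s ^ 2) + √(k2 - k1) * s) / √(1 + k1 * s ^ 2) := by
    rw [← exp_nat_mul, Nat.cast_ofNat, mul_div_cancel₀ _ two_ne_zero, exp_sub, exp_log hpos,
      exp_half, exp_log hs]
  have hrpow : (((1 + k1 * s ^ 2) * (1 + k2 * s ^ 2)) ^ ((1 : ℝ) / 4)) ^ 2
      = √(1 + k1 * s ^ 2) * √(1 + k2 * s ^ 2) := by
    rw [← rpow_natCast, ← rpow_mul (mul_nonneg hs.le hB), ← sqrt_mul hs.le, sqrt_eq_rpow]
    norm_num
  rw [phi, integral_phi_integrand hk hs, mul_pow, hexp, hrpow]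
  field_simp

lemma inv_phi_sq_add_inv_phi_sq_neg {k1 k2 s : ℝ} (hk : k1 ≤ k2) (hs : 0 < 1 + k1 * s ^ 2) :
    (phi k1 k2 s ^ 2)⁻¹ + (phi k1 k2 (-s) ^ 2)⁻¹ = 2 * (1 + k1 * s ^ 2)⁻¹ := by
  have hc : √(k2 - k1) ^ 2 = k2 - k1 := sq_sqrt (sub_nonneg.mpr hk)
  have hlt := abs_mul_lt_sqrt hc hs
  have hB : 0 ≤ 1 + k2 * s ^ 2 := by nlinarith
  have hβ : 0 < √(1 + k2 * s ^ 2) := (abs_nonneg _).trans_lt hlt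
  have hprod : (√(1 + k2 * s ^ 2) + √(k2 - k1) * s) * (√(1 + k2 * s ^ 2) - √(k2 - k1) * s)
      = 1 + k1 * s ^ 2 := by
    linear_combination sq_sqrt hB - s ^ 2 * hc
  rw [phi_sq hk hs, phi_sq hk (by rwa [neg_sq]), neg_sq, mul_neg, ← sub_eq_add_neg, ← hprod]
  have hplus := sqrt_add_mul_pos hc hs
  have hminus : 0 < √(1 + k2 * s ^ 2) - √(k2 - k1) * s := by linarith [le_abs_self (√(k2 - k1) * s)]
  generalize √(k2 - k1) * s = x at *
  generalize √(1 + k2 * s ^ 2) = β at *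
  field_simp
  ring

lemma integral_inv_one_add_mul_cos_sq {m : ℝ} (hm : 0 < 1 + m) :
    ∫ t in (0 : ℝ)..π, (1 + m * cos t ^ 2)⁻¹ = π / √(1 + m) := by
  set q := √(1 + m)
  have hq : 0 < q := sqrt_pos.mpr hm
  have hq2 : q ^ 2 = 1 + m := sq_sqrt hm.le
  have hv : ∀ t, 0 < q * cos t ^ 2 + sin t ^ 2 := fun t => by
    nlinarith [sin_sq_add_cos_sq t, sq_nonneg (sin t), sq_nonneg (cos t)]
  have hD : ∀ t, (q * cos t ^ 2 + sin t ^ 2) ^ 2 + ((1 - q) * (sin t * cos t)) ^ 2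
      = 1 + m * cos t ^ 2 := fun t => by
    linear_combination (cos t ^ 4 + sin t ^ 2 * cos t ^ 2) * hq2
      + (sin t ^ 2 + (1 + m) * cos t ^ 2 + 1) * sin_sq_add_cos_sq t
  have hDpos : ∀ t, 0 < 1 + m * cos t ^ 2 := fun t => by
    rw [← hD]; have := hv t; positivity
  -- the continuous branch of `arctan (tan t / q) / q`
  have hG : ∀ t, HasDerivAt
      (fun t => (t + arctan ((1 - q) * (sin t * cos t) / (q * cos t ^ 2 + sin t ^ 2))) / q)
      (1 + m * cos t ^ 2)⁻¹ t := by
    intro t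
    have hu : HasDerivAt (fun t => (1 - q) * (sin t * cos t))
        ((1 - q) * (cos t ^ 2 - sin t ^ 2)) t :=
      (((hasDerivAt_sin t).mul (hasDerivAt_cos t)).const_mul (1 - q)).congr_deriv (by ring)
    have hw : HasDerivAt (fun t => q * cos t ^ 2 + sin t ^ 2)
        (2 * (1 - q) * sin t * cos t) t :=
      ((((hasDerivAt_cos t).pow 2).const_mul q).add ((hasDerivAt_sin t).pow 2)).congr_deriv
        (by push_cast; ring)
    refine (((hasDerivAt_id t).add ((hu.div hw (hv t).ne').arctan)).div_const q).congr_deriv ?_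
    have hN : (1 - q) * (cos t ^ 2 - sin t ^ 2) * (q * cos t ^ 2 + sin t ^ 2)
        - (1 - q) * (sin t * cos t) * (2 * (1 - q) * sin t * cos t) = q - (1 + m * cos t ^ 2) := by
      linear_combination (-(cos t ^ 2)) * hq2
        + (1 - q) * (q * cos t ^ 2 - sin t ^ 2 - 1) * sin_sq_add_cos_sq t
    rw [Pi.div_apply, div_pow, one_add_div (pow_ne_zero 2 (hv t).ne'), hD t, hN, one_div_div,
      mul_comm, div_mul_div_cancel₀ (pow_ne_zero 2 (hv t).ne')]
    have := (hDpos t).ne'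
    field_simp
    ring
  rw [integral_eq_sub_of_hasDerivAt (fun t _ => hG t)
    ((Continuous.inv₀ (by fun_prop) fun t => (hDpos t).ne').intervalIntegrable _ _)]
  simp

lemma integral_comp_cos_of_add_comp_neg {f h : ℝ → ℝ}
    (hf : IntervalIntegrable (fun t => f (cos t)) MeasureTheory.volume 0 π)
    (hfh : ∀ x ∈ Set.Icc (-1 : ℝ) 1, f x + f (-x) = 2 * h x) :
    ∫ t in (0 : ℝ)..π, f (cos t) = ∫ t in (0 : ℝ)..π, h (cos t) := by
  have hreflect : ∫ t in (0 : ℝ)..π, f (-cos t) = ∫ t in (0 : ℝ)..π, f (cos t) := by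
    simpa only [cos_pi_sub, sub_zero, sub_self] using
      integral_comp_sub_left (a := 0) (b := π) (fun t => f (cos t)) π
  have hf' : IntervalIntegrable (fun t => f (-cos t)) MeasureTheory.volume 0 π := by
    simpa only [cos_pi_sub, sub_zero, sub_self] using (hf.comp_sub_left π).symm
  have hsum := integral_add hf hf'
  rw [hreflect, integral_congr fun t _ => hfh (cos t) ⟨neg_one_le_cos t, cos_le_one t⟩,
    integral_const_mul] at hsum
  linarith

lemma intervalIntegrable_inv_phi_sq_comp_cos {k1 k2 b : ℝ} (hk : k1 ≤ k2)
    (hb : 0 < 1 + k1 * b ^ 2) :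
    IntervalIntegrable (fun t => (phi k1 k2 (b * cos t) ^ 2)⁻¹) MeasureTheory.volume 0 π := by
  have hcos : ∀ t, 0 < 1 + k1 * (b * cos t) ^ 2 := fun t =>
    one_add_mul_sq_pos_of_sq_le hb (by nlinarith [cos_sq_le_one t, sq_nonneg b])
  have hc : √(k2 - k1) ^ 2 = k2 - k1 := sq_sqrt (sub_nonneg.mpr hk)
  simp only [phi_sq hk (hcos _)]
  refine (Continuous.inv₀ (by fun_prop) fun t => ?_).intervalIntegrable _ _
  exact (mul_pos ((abs_nonneg _).trans_lt (abs_mul_lt_sqrt hc (hcos t)))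
    (sqrt_add_mul_pos hc (hcos t))).ne'

theorem stmt_6_general (k1 k2 b : ℝ) (hk : k1 < k2)
    (h1 : 0 < 1 + k1 * b ^ 2)
    (φ : ℝ → ℝ)
    (hφ : ∀ s, φ s = ((1 + k1 * s ^ 2) * (1 + k2 * s ^ 2)) ^ ((1 : ℝ) / 4) *
      Real.exp (∫ t in (0 : ℝ)..s,
        Real.sqrt (k2 - k1) / (2 * (1 + k1 * t ^ 2) * Real.sqrt (1 + k2 * t ^ 2)))) :
    (∫ t in (0 : ℝ)..Real.pi, (φ (b * Real.cos t) ^ 2)⁻¹) =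
        Real.pi / Real.sqrt (1 + k1 * b ^ 2) ∧
      Real.pi / (∫ t in (0 : ℝ)..Real.pi, (φ (b * Real.cos t) ^ 2)⁻¹) =
        Real.sqrt (1 + k1 * b ^ 2) := by
  obtain rfl : φ = phi k1 k2 := funext hφ
  have hsymm : ∀ x ∈ Set.Icc (-1 : ℝ) 1, (phi k1 k2 (b * x) ^ 2)⁻¹ + (phi k1 k2 (b * -x) ^ 2)⁻¹
      = 2 * (1 + k1 * b ^ 2 * x ^ 2)⁻¹ := fun x hx => by
    have hx2 : x ^ 2 ≤ 1 := (sq_le_one_iff_abs_le_one x).mpr (abs_le.mpr hx)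
    rw [mul_neg, inv_phi_sq_add_inv_phi_sq_neg hk.le
      (one_add_mul_sq_pos_of_sq_le h1 (by nlinarith [sq_nonneg b])), mul_pow, mul_assoc]
  have hint : ∫ t in (0 : ℝ)..π, (phi k1 k2 (b * cos t) ^ 2)⁻¹ = π / √(1 + k1 * b ^ 2) := by
    rw [integral_comp_cos_of_add_comp_neg (h := fun x => (1 + k1 * b ^ 2 * x ^ 2)⁻¹)
      (intervalIntegrable_inv_phi_sq_comp_cos hk.le h1) hsymm,
      integral_inv_one_add_mul_cos_sq h1]
  exact ⟨hint, by rw [hint, div_div_cancel₀ pi_ne_zero]⟩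

/-- the n = 2 Busemann–Hausdorff volume factor of the paper's φ
is `√(1+k1 b²)`. -/
theorem stmt_6 (k1 k2 b : ℝ) (hk : k1 < k2) (hb : 0 ≤ b)
    (h1 : 0 < 1 + k1 * b ^ 2) (h2 : 0 < 1 + k2 * b ^ 2)
    (φ : ℝ → ℝ)
    (hφ : ∀ s, φ s = ((1 + k1 * s ^ 2) * (1 + k2 * s ^ 2)) ^ ((1 : ℝ) / 4) *
      Real.exp (∫ t in (0 : ℝ)..s,
        Real.sqrt (k2 - k1) / (2 * (1 + k1 * t ^ 2) * Real.sqrt (1 + k2 * t ^ 2)))) :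
    (∫ t in (0 : ℝ)..Real.pi, (φ (b * Real.cos t) ^ 2)⁻¹) =
        Real.pi / Real.sqrt (1 + k1 * b ^ 2) ∧
      Real.pi / (∫ t in (0 : ℝ)..Real.pi, (φ (b * Real.cos t) ^ 2)⁻¹) =
        Real.sqrt (1 + k1 * b ^ 2) :=
  stmt_6_general k1 k2 b hk h1 φ hφ
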